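/- Let p : ℝ² → ℝ⁴ have polynomial components of total degree at most n, let D = (d_{j,k}) satisfy B_j^m(p(s,t)) = Σ_{|k|=mn} d_{j,k} B_k^{mn}(s,t) for all (s,t) ∈ ℝ² and all |j| = m, and let A be the Gram matrix with entries a_{k,k'} = ∫_Ω B_k^{mn} B_{k'}^{mn} ds dt. If λ_min > 0 denotes the smallest eigenvalue of the (positive definite) symmetric matrix A, then for every coefficient vector b, sup_{(s,t)∈Ω} |q_b(p(s,t))| ≤ (1/√λ_min) · √(∫_Ω (q_b(p(s,t)))² ds dt), where q_b(u) = Σ_{|j|=m} b_j B_j^m(u). That is, the pointwise algebraic error is controlled by the weak (L²) algebraic error. -/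

import Mathlib

open MeasureTheory Finset

/-- The multinomial coefficient `n! / ∏ l, (i l)!` as a real number. -/
noncomputable def mcoef {L : ℕ} (n : ℕ) (i : Fin L → ℕ) : ℝ :=
  (n.factorial : ℝ) / ∏ l, ((i l).factorial : ℝ)

/-- The Bernstein basis polynomial of degree `n` for the multi-index `i`,
as a function of barycentric coordinates `β : Fin L → ℝ`. -/
noncomputable def bern {L : ℕ} (n : ℕ) (i : Fin L → ℕ) (β : Fin L → ℝ) : ℝ :=
  mcoef n i * ∏ l, β l ^ i l

/-- The triangular Bernstein basis polynomial of degree `n` for a multi-index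
`i : Fin 3 → ℕ`, as a function on `ℝ²`. -/
noncomputable def triBern (n : ℕ) (i : Fin 3 → ℕ) (x : ℝ × ℝ) : ℝ :=
  mcoef n i * (x.1 ^ i 0 * x.2 ^ i 1 * (1 - x.1 - x.2) ^ i 2)

/-- The tetrahedral Bernstein basis polynomial of degree `m` for a multi-index
`j : Fin 4 → ℕ`, as a function on `ℝ⁴`. -/
noncomputable def tetBern (m : ℕ) (j : Fin 4 → ℕ) (u : Fin 4 → ℝ) : ℝ :=
  mcoef m j * ∏ l, u l ^ j l

/-- The standard triangle `Ω = {(s,t) : 0 ≤ s, 0 ≤ t, s + t ≤ 1}` in `ℝ²`. -/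
def Omega : Set (ℝ × ℝ) := {x | 0 ≤ x.1 ∧ 0 ≤ x.2 ∧ x.1 + x.2 ≤ 1}

/-- `p : ℝ² → ℝ⁴` has components that are real polynomials in `(s,t)` of
total degree at most `n`. -/
def PolyComponents (n : ℕ) (p : ℝ × ℝ → Fin 4 → ℝ) : Prop :=
  ∀ l : Fin 4, ∃ P : MvPolynomial (Fin 2) ℝ, P.totalDegree ≤ n ∧
    ∀ x : ℝ × ℝ, p x l = MvPolynomial.eval ![x.1, x.2] P

/-! Write `c = Dᵀ b` for the coefficients of `q_b ∘ p` in the degree-`mn` triangular Bernstein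
basis. On `Ω` the Bernstein polynomials are nonnegative and sum to one, so `|q_b(p(s,t))|` is
at most a convex combination of the `|c_k|`, hence at most `‖c‖₂`. On the other hand
`∫_Ω (q_b ∘ p)² = cᵀ A c ≥ λ_min ‖c‖₂²`, because `A - λ_min I` is positive semidefinite. -/

open Matrix

theorem Matrix.IsHermitian.posSemidef_sub_smul_one {ι : Type*} [Fintype ι] [DecidableEq ι]
    {A : Matrix ι ι ℝ} (hA : A.IsHermitian) {lam : ℝ}
    (hlam : ∀ (μ : ℝ) (v : ι → ℝ), v ≠ 0 → A *ᵥ v = μ • v → lam ≤ μ) :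
    (A - lam • 1).PosSemidef := by
  have hB : (A - lam • 1).IsHermitian := hA.sub (by simp [IsHermitian, transpose_smul])
  rw [hB.posSemidef_iff_eigenvalues_nonneg]
  intro i
  have hv : ⇑(hB.eigenvectorBasis i) ≠ 0 := by
    simpa using (hB.eigenvectorBasis.orthonormal.ne_zero i)
  have hBv := hB.mulVec_eigenvectorBasis i
  rw [sub_mulVec, smul_mulVec, one_mulVec] at hBv
  have heig : A *ᵥ ⇑(hB.eigenvectorBasis i) =
      (hB.eigenvalues i + lam) • ⇑(hB.eigenvectorBasis i) := by
    rw [add_smul, ← hBv]; abel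
  simpa using hlam _ _ hv heig

theorem Matrix.IsHermitian.mul_dotProduct_self_le_dotProduct_mulVec {ι : Type*} [Fintype ι]
    [DecidableEq ι] {A : Matrix ι ι ℝ} (hA : A.IsHermitian) {lam : ℝ}
    (hlam : ∀ (μ : ℝ) (v : ι → ℝ), v ≠ 0 → A *ᵥ v = μ • v → lam ≤ μ) (c : ι → ℝ) :
    lam * (c ⬝ᵥ c) ≤ c ⬝ᵥ (A *ᵥ c) := by
  have h := (hA.posSemidef_sub_smul_one hlam).dotProduct_mulVec_nonneg c
  simp only [star_trivial, sub_mulVec, smul_mulVec, one_mulVec, dotProduct_sub, dotProduct_smul,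
    smul_eq_mul] at h
  linarith

theorem mul_sum_sq_le_sum_sum_of_mem_lowerBounds {ι : Type*} (S : Finset ι) {G : ι → ι → ℝ}
    (hG : ∀ k k', G k k' = G k' k) {lam : ℝ}
    (hlam : lam ∈ lowerBounds {μ : ℝ | ∃ v : ι → ℝ, (∃ k ∈ S, v k ≠ 0) ∧
      ∀ k ∈ S, ∑ k' ∈ S, G k k' * v k' = μ * v k})
    (c : ι → ℝ) :
    lam * ∑ k ∈ S, c k ^ 2 ≤ ∑ k ∈ S, ∑ k' ∈ S, G k k' * c k' * c k := by
  classical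
  let A : Matrix S S ℝ := of fun i j => G i j
  have hA : A.IsHermitian := by ext i j; simp [A, hG]
  have hlamA : ∀ (μ : ℝ) (v : S → ℝ), v ≠ 0 → A *ᵥ v = μ • v → lam ≤ μ := by
    intro μ v hv heig
    refine hlam ⟨fun k => if h : k ∈ S then v ⟨k, h⟩ else 0, ?_, fun k hk => ?_⟩
    · obtain ⟨i, hi⟩ := Function.ne_iff.mp hv
      exact ⟨i, i.2, by simpa using hi⟩
    · have := congrFun heig ⟨k, hk⟩
      simp only [mulVec, dotProduct, of_apply, Pi.smul_apply, smul_eq_mul, A] at this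
      simp only [dif_pos hk, ← this, ← sum_coe_sort S]
      exact sum_congr rfl fun i _ => by simp
  have key := hA.mul_dotProduct_self_le_dotProduct_mulVec hlamA (fun i => c i)
  simp only [dotProduct, mulVec, of_apply, A] at key
  calc lam * ∑ k ∈ S, c k ^ 2 = lam * ∑ i : S, c i * c i := by
        simp only [sum_coe_sort S (fun k => c k * c k), sq]
    _ ≤ ∑ i : S, c i * ∑ j : S, G i j * c j := key
    _ = ∑ k ∈ S, ∑ k' ∈ S, G k k' * c k' * c k := by
        rw [sum_coe_sort S (fun k => c k * ∑ j : S, G k j * c j)]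
        refine sum_congr rfl fun k _ => ?_
        rw [sum_coe_sort S (fun j => G k j * c j), mul_sum]
        exact sum_congr rfl fun _ _ => by ring

theorem abs_sum_mul_le_sqrt_sum_sq {ι : Type*} {S : Finset ι} {w : ι → ℝ}
    (hw : ∀ k ∈ S, 0 ≤ w k) (hw1 : ∑ k ∈ S, w k = 1) (c : ι → ℝ) :
    |∑ k ∈ S, c k * w k| ≤ √(∑ k ∈ S, c k ^ 2) :=
  calc |∑ k ∈ S, c k * w k| ≤ ∑ k ∈ S, |c k| * w k := by
        refine (abs_sum_le_sum_abs _ _).trans_eq (sum_congr rfl fun k hk => ?_)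
        rw [abs_mul, abs_of_nonneg (hw k hk)]
    _ ≤ ∑ k ∈ S, √(∑ k' ∈ S, c k' ^ 2) * w k := by
        refine sum_le_sum fun k hk => mul_le_mul_of_nonneg_right ?_ (hw k hk)
        rw [← Real.sqrt_sq_eq_abs]
        exact Real.sqrt_le_sqrt (single_le_sum (fun i _ => sq_nonneg (c i)) hk)
    _ = √(∑ k ∈ S, c k ^ 2) := by rw [← mul_sum, hw1, mul_one]

theorem integral_sum_mul_sq {α ι : Type*} [MeasurableSpace α] {μ : Measure α} (S : Finset ι)
    {f : ι → α → ℝ} (hf : ∀ k k', Integrable (fun x => f k x * f k' x) μ) (c : ι → ℝ) :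
    ∫ x, (∑ k ∈ S, c k * f k x) ^ 2 ∂μ =
      ∑ k ∈ S, ∑ k' ∈ S, (∫ x, f k x * f k' x ∂μ) * c k' * c k := by
  have hsq : ∀ x, (∑ k ∈ S, c k * f k x) ^ 2 =
      ∑ k ∈ S, ∑ k' ∈ S, (c k' * c k) * (f k x * f k' x) := fun x => by
    rw [sq, sum_mul_sum]
    exact sum_congr rfl fun k _ => sum_congr rfl fun k' _ => by ring
  simp_rw [hsq]
  rw [integral_finsetSum S fun k _ => integrable_finsetSum S fun k' _ => (hf k k').const_mul _]
  refine sum_congr rfl fun k _ => ?_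
  rw [integral_finsetSum S fun k' _ => (hf k k').const_mul _]
  exact sum_congr rfl fun k' _ => by rw [integral_const_mul]; ring

theorem mcoef_eq_multinomial {L N : ℕ} {k : Fin L → ℕ} (hk : ∑ l, k l = N) :
    mcoef N k = Nat.multinomial univ k := by
  rw [mcoef, div_eq_iff (by positivity), ← hk, ← Nat.multinomial_spec univ k]
  push_cast
  ring

theorem sum_triBern (N : ℕ) (x : ℝ × ℝ) :
    ∑ k ∈ Nat.antidiagonalTuple 3 N, triBern N k x = 1 := by
  have h := sum_pow_eq_sum_piAntidiag univ ![x.1, x.2, 1 - x.1 - x.2] N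
  simp only [Fin.sum_univ_three, Matrix.cons_val_zero, Matrix.cons_val_one,
    Matrix.cons_val_two, Matrix.head_cons, Matrix.tail_cons,
    show x.1 + x.2 + (1 - x.1 - x.2) = 1 by ring, one_pow] at h
  rw [← piAntidiag_univ_fin_eq_antidiagonalTuple, h]
  refine sum_congr rfl fun k hk => ?_
  rw [triBern, mcoef_eq_multinomial (mem_piAntidiag.mp hk).1, Fin.prod_univ_three]
  simp [mul_assoc]

theorem triBern_nonneg (N : ℕ) (k : Fin 3 → ℕ) {x : ℝ × ℝ} (hx : x ∈ Omega) :
    0 ≤ triBern N k x := by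
  obtain ⟨h1, h2, h3⟩ := hx
  have : 0 ≤ 1 - x.1 - x.2 := by linarith
  unfold triBern mcoef
  positivity

theorem isCompact_Omega : IsCompact Omega := by
  refine (isCompact_Icc (a := ((0 : ℝ), (0 : ℝ))) (b := (1, 1))).of_isClosed_subset ?_ ?_
  · exact (isClosed_le continuous_const continuous_fst).inter
      ((isClosed_le continuous_const continuous_snd).inter
        (isClosed_le (continuous_fst.add continuous_snd) continuous_const))
  · rintro x ⟨h1, h2, h3⟩
    exact ⟨⟨h1, h2⟩, by linarith, by linarith⟩

theorem integrableOn_triBern_mul (N : ℕ) (k k' : Fin 3 → ℕ) :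
    IntegrableOn (fun x => triBern N k x * triBern N k' x) Omega :=
  ContinuousOn.integrableOn_compact isCompact_Omega (by unfold triBern; fun_prop)

theorem pointwise_le_weak_general (n m : ℕ) (p : ℝ × ℝ → Fin 4 → ℝ)
    (d : (Fin 4 → ℕ) → (Fin 3 → ℕ) → ℝ)
    (hD : ∀ j ∈ Finset.Nat.antidiagonalTuple 4 m, ∀ x : ℝ × ℝ,
      tetBern m j (p x) =
        ∑ k ∈ Finset.Nat.antidiagonalTuple 3 (m * n), d j k * triBern (m * n) k x)
    (lam : ℝ) (hpos : 0 < lam)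
    (hlam : IsLeast {μ : ℝ | ∃ c : (Fin 3 → ℕ) → ℝ,
      (∃ k ∈ Finset.Nat.antidiagonalTuple 3 (m * n), c k ≠ 0) ∧
      ∀ k ∈ Finset.Nat.antidiagonalTuple 3 (m * n),
        ∑ k' ∈ Finset.Nat.antidiagonalTuple 3 (m * n),
          (∫ x in Omega, triBern (m * n) k x * triBern (m * n) k' x) * c k' = μ * c k}
      lam)
    (b : (Fin 4 → ℕ) → ℝ) :
    ∀ x ∈ Omega,
      |∑ j ∈ Finset.Nat.antidiagonalTuple 4 m, b j * tetBern m j (p x)| ≤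
        (1 / Real.sqrt lam) * Real.sqrt (∫ x in Omega,
          (∑ j ∈ Finset.Nat.antidiagonalTuple 4 m, b j * tetBern m j (p x)) ^ 2) := by
  intro x hx
  set S := Nat.antidiagonalTuple 3 (m * n)
  let c : (Fin 3 → ℕ) → ℝ := fun k => ∑ j ∈ Nat.antidiagonalTuple 4 m, b j * d j k
  have hq : ∀ y, ∑ j ∈ Nat.antidiagonalTuple 4 m, b j * tetBern m j (p y) =
      ∑ k ∈ S, c k * triBern (m * n) k y := fun y => by
    rw [sum_congr rfl fun j hj => by rw [hD j hj y, mul_sum], sum_comm]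
    simp only [c, sum_mul, mul_assoc]
  have hgram : lam * ∑ k ∈ S, c k ^ 2 ≤
      ∫ y in Omega, (∑ j ∈ Nat.antidiagonalTuple 4 m, b j * tetBern m j (p y)) ^ 2 := by
    simp_rw [hq]
    rw [integral_sum_mul_sq S (fun k k' => integrableOn_triBern_mul (m * n) k k')]
    exact mul_sum_sq_le_sum_sum_of_mem_lowerBounds S (fun k k' => by simp_rw [mul_comm])
      hlam.2 c
  rw [hq x]
  calc |∑ k ∈ S, c k * triBern (m * n) k x| ≤ √(∑ k ∈ S, c k ^ 2) :=
        abs_sum_mul_le_sqrt_sum_sq (fun k _ => triBern_nonneg _ k hx) (sum_triBern _ x) c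
    _ ≤ √((∫ y in Omega, (∑ j ∈ Nat.antidiagonalTuple 4 m, b j * tetBern m j (p y)) ^ 2) / lam) :=
        Real.sqrt_le_sqrt (by rw [le_div_iff₀ hpos]; linarith)
    _ = _ := by rw [Real.sqrt_div' _ hpos.le, div_eq_inv_mul, one_div]

/-- the pointwise algebraic error on `Ω` is controlled by the
weak (L²) algebraic error, via the smallest eigenvalue `λ_min > 0` of the Gram
matrix `A`. -/
theorem pointwise_le_weak (n m : ℕ) (p : ℝ × ℝ → Fin 4 → ℝ)
    (hp : PolyComponents n p) (d : (Fin 4 → ℕ) → (Fin 3 → ℕ) → ℝ)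
    (hD : ∀ j ∈ Finset.Nat.antidiagonalTuple 4 m, ∀ x : ℝ × ℝ,
      tetBern m j (p x) =
        ∑ k ∈ Finset.Nat.antidiagonalTuple 3 (m * n), d j k * triBern (m * n) k x)
    (lam : ℝ) (hpos : 0 < lam)
    (hlam : IsLeast {μ : ℝ | ∃ c : (Fin 3 → ℕ) → ℝ,
      (∃ k ∈ Finset.Nat.antidiagonalTuple 3 (m * n), c k ≠ 0) ∧
      ∀ k ∈ Finset.Nat.antidiagonalTuple 3 (m * n),
        ∑ k' ∈ Finset.Nat.antidiagonalTuple 3 (m * n),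
          (∫ x in Omega, triBern (m * n) k x * triBern (m * n) k' x) * c k' = μ * c k}
      lam)
    (b : (Fin 4 → ℕ) → ℝ) :
    ∀ x ∈ Omega,
      |∑ j ∈ Finset.Nat.antidiagonalTuple 4 m, b j * tetBern m j (p x)| ≤
        (1 / Real.sqrt lam) * Real.sqrt (∫ x in Omega,
          (∑ j ∈ Finset.Nat.antidiagonalTuple 4 m, b j * tetBern m j (p x)) ^ 2) :=
  pointwise_le_weak_general n m p d hD lam hpos hlam b
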